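/- arXiv:2309.15560 — 7 statements merged into one kernel-verified Lean document; each statement's English description precedes it below -/
import Mathlib

section
/- Let X and T be finite sets, D ⊆ X × T, and r, r', o, o' : functions with r, o : to positive reals and r', o' : to positive reals. Define a graph G on vertex set T with an edge between s and t iff there exists x ∈ X with (x,s) ∈ D and (x,t) ∈ D. If G is connected, every x ∈ X appears in some pair of D, every t ∈ T appears in some pair of D, and r(x)·o(t) = r'(x)·o'(t) for all (x,t) ∈ D, then there exists a constant C > 0 such that r(x) = C·r'(x) for all x ∈ X. -/
/-- The identifiability graph (IG) of a dataset `D` of (feature, bias factor) pairs: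
vertices are bias factors, with an edge between `s` and `t` iff some feature `x`
occurs with both in `D`. -/
def IG {X T : Type*} (D : Set (X × T)) : SimpleGraph T where
  Adj s t := s ≠ t ∧ ∃ x : X, (x, s) ∈ D ∧ (x, t) ∈ D
  symm := by
    constructor
    rintro s t ⟨hne, x, hs, ht⟩
    exact ⟨hne.symm, x, ht, hs⟩
  loopless := by
    constructor
    rintro t ⟨hne, -⟩
    exact hne rfl

theorem identifiability_of_connected
    {X T : Type*} [Fintype X] [Fintype T]
    (D : Set (X × T)) (r r' : X → ℝ) (o o' : T → ℝ)
    (hr : ∀ x, 0 < r x) (hr' : ∀ x, 0 < r' x)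
    (ho : ∀ t, 0 < o t) (ho' : ∀ t, 0 < o' t)
    (hconn : (IG D).Connected)
    (hX : ∀ x : X, ∃ t : T, (x, t) ∈ D)
    (hT : ∀ t : T, ∃ x : X, (x, t) ∈ D)
    (hfit : ∀ x t, (x, t) ∈ D → r x * o t = r' x * o' t) :
    ∃ C : ℝ, 0 < C ∧ ∀ x : X, r x = C * r' x := by
  set f : T → ℝ := fun t => o' t / o t with hf
  -- key: if (x,t) ∈ D then r x = f t * r' x
  have key : ∀ x t, (x, t) ∈ D → r x = f t * r' x := by
    intro x t hxt
    have h := hfit x t hxt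
    have : f t * r' x = r' x * o' t / o t := by
      rw [hf]; ring
    rw [this, eq_div_iff (ho t).ne']
    linarith
  have fpos : ∀ t, 0 < f t := fun t => div_pos (ho' t) (ho t)
  -- f is constant along edges
  have hedge : ∀ s t, (IG D).Adj s t → f s = f t := by
    rintro s t ⟨-, x, hs, ht⟩
    have h1 := key x s hs
    have h2 := key x t ht
    have := hr' x
    nlinarith
  have hreach : ∀ s t : T, f s = f t := by
    intro s t
    obtain ⟨w⟩ := hconn.preconnected s t
    induction w with
    | nil => rfl
    | cons h p ih => exact (hedge _ _ h).trans ih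
  obtain ⟨t₀⟩ := hconn.nonempty
  refine ⟨f t₀, fpos t₀, fun x => ?_⟩
  obtain ⟨t, ht⟩ := hX x
  rw [key x t ht, hreach t₀ t]
end

section
/- Let X and T be finite nonempty sets, D ⊆ X × T with every x ∈ X and every t ∈ T appearing in D. Define the identifiability graph G on T with an edge between s and t iff some x satisfies (x,s) ∈ D and (x,t) ∈ D. If G is disconnected, then for any functions r : X → (0,∞) and o : T → (0,∞), there exist functions r' : X → (0,∞) and o' : T → (0,∞) with r(x)·o(t) = r'(x)·o'(t) for all (x,t) ∈ D, such that there is NO constant C > 0 with r(x) = C·r'(x) for all x ∈ X. -/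
theorem unidentifiability_of_disconnected
    {X T : Type*} [Fintype X] [Fintype T] [Nonempty X] [Nonempty T]
    (D : Set (X × T))
    (hX : ∀ x : X, ∃ t : T, (x, t) ∈ D)
    (hT : ∀ t : T, ∃ x : X, (x, t) ∈ D)
    (hdisc : ¬ (IG D).Connected)
    (r : X → ℝ) (o : T → ℝ)
    (hr : ∀ x, 0 < r x) (ho : ∀ t, 0 < o t) :
    ∃ (r' : X → ℝ) (o' : T → ℝ),
      (∀ x, 0 < r' x) ∧ (∀ t, 0 < o' t) ∧
      (∀ x t, (x, t) ∈ D → r x * o t = r' x * o' t) ∧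
      ¬ ∃ C : ℝ, 0 < C ∧ ∀ x : X, r x = C * r' x := by
  have hpre : ¬ (IG D).Preconnected := by
    intro h
    exact hdisc ⟨h⟩
  simp only [SimpleGraph.Preconnected, not_forall] at hpre
  obtain ⟨t0, t1, hnot⟩ := hpre
  classical
  set P : X → Prop := fun x => ∃ t, (x, t) ∈ D ∧ (IG D).Reachable t0 t with hP
  refine ⟨fun x => if P x then 2 * r x else r x,
          fun t => if (IG D).Reachable t0 t then o t / 2 else o t, ?_, ?_, ?_, ?_⟩
  · intro x
    by_cases h : P x <;> simp [h] <;> linarith [hr x]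
  · intro t
    by_cases h : (IG D).Reachable t0 t <;> simp [h] <;> linarith [ho t]
  · intro x t hxt
    by_cases h : (IG D).Reachable t0 t
    · have hPx : P x := ⟨t, hxt, h⟩
      simp [hPx, h]; ring
    · have hPx : ¬ P x := by
        rintro ⟨t', hxt', hreach⟩
        rcases eq_or_ne t' t with rfl | hne
        · exact h hreach
        · exact h (hreach.trans (SimpleGraph.Adj.reachable ⟨hne, x, hxt', hxt⟩))
      simp [hPx, h]
  · rintro ⟨C, hC, hall⟩
    obtain ⟨x0, hx0⟩ := hT t0
    obtain ⟨x1, hx1⟩ := hT t1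
    have hPx0 : P x0 := ⟨t0, hx0, SimpleGraph.Reachable.refl t0⟩
    have hPx1 : ¬ P x1 := by
      rintro ⟨t', hxt', hreach⟩
      rcases eq_or_ne t' t1 with rfl | hne
      · exact hnot hreach
      · exact hnot (hreach.trans (SimpleGraph.Adj.reachable ⟨hne, x1, hxt', hx1⟩))
    have h0 := hall x0
    have h1 := hall x1
    simp only [hPx0, hPx1, if_pos, if_neg, if_true, if_false] at h0 h1
    have hC1 : C = 1 := by
      have := hr x1
      nlinarith
    rw [hC1, one_mul] at h0
    nlinarith [hr x0]
end

section
/- Let X, T be finite sets, D ⊆ X × T such that the identifiability graph (vertices T, edge s–t iff ∃x, (x,s) ∈ D ∧ (x,t) ∈ D) is connected, and let r, o, r', o' be positive functions with r(x)o(t) = r'(x)o'(t) for all (x,t) ∈ D, where every x ∈ X and t ∈ T occur in D. Then for all x₁, x₂ ∈ X appearing in D with bias factors t₁, t₂ (i.e., (x₁,t₁), (x₂,t₂) ∈ D), r(x₁)/r(x₂) = r'(x₁)/r'(x₂); in particular, r and r' induce the same ranking: r(x₁) ≥ r(x₂) ⟺ r'(x₁) ≥ r'(x₂). -/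
/-- Under a connected identifiability graph, a click-fitting model `(r', o')`
induces the same pairwise relevance ratios, and hence the same ranking, as the
true model `(r, o)`. -/
theorem ranking_preserved_of_connected
    {X T : Type*} [Fintype X] [Fintype T]
    (D : Set (X × T))
    (hconn : (IG D).Connected)
    (hX : ∀ x : X, ∃ t : T, (x, t) ∈ D)
    (hT : ∀ t : T, ∃ x : X, (x, t) ∈ D)
    (r r' : X → ℝ) (o o' : T → ℝ)
    (hr : ∀ x, 0 < r x) (hr' : ∀ x, 0 < r' x)
    (ho : ∀ t, 0 < o t) (ho' : ∀ t, 0 < o' t)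
    (hfit : ∀ x t, (x, t) ∈ D → r x * o t = r' x * o' t) :
    ∀ x₁ x₂ : X, ∀ t₁ t₂ : T, (x₁, t₁) ∈ D → (x₂, t₂) ∈ D →
      r x₁ / r x₂ = r' x₁ / r' x₂ ∧ (r x₁ ≥ r x₂ ↔ r' x₁ ≥ r' x₂) := by

  -- the ratio o'/o is constant along edges of IG, hence on all of T
  have key : ∀ s t : T, (IG D).Reachable s t → o' s / o s = o' t / o t := by
    intro s t h
    obtain ⟨w⟩ := h
    induction w with
    | nil => rfl
    | cons h p ih =>
      rename_i a b c
      obtain ⟨-, x, hbx, hcx⟩ := h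
      have h1 := hfit x _ hbx
      have h2 := hfit x _ hcx
      have e1 : o' a / o a = r x / r' x := by
        rw [div_eq_div_iff (ho a).ne' (hr' x).ne']
        linarith [h1]
      rw [e1]
      have e2 : r x / r' x = o' b / o b := by
        rw [div_eq_div_iff (hr' x).ne' (ho b).ne']
        linarith [h2]
      rw [e2]
      exact ih
  intro x₁ x₂ t₁ t₂ h1 h2
  have hc := key t₁ t₂ (hconn.preconnected t₁ t₂)
  have f1 := hfit x₁ t₁ h1
  have f2 := hfit x₂ t₂ h2
  have e1 : r x₁ / r' x₁ = o' t₁ / o t₁ := by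
    rw [div_eq_div_iff (hr' x₁).ne' (ho t₁).ne']; linarith
  have e2 : r x₂ / r' x₂ = o' t₂ / o t₂ := by
    rw [div_eq_div_iff (hr' x₂).ne' (ho t₂).ne']; linarith
  have heq : r x₁ / r' x₁ = r x₂ / r' x₂ := by rw [e1, e2, hc]
  have hmul : r x₁ * r' x₂ = r x₂ * r' x₁ := by
    rw [div_eq_div_iff (hr' x₁).ne' (hr' x₂).ne'] at heq
    linarith
  constructor
  · rw [div_eq_div_iff (hr x₂).ne' (hr' x₂).ne']
    linarith
  · constructor
    · intro h
      have := mul_le_mul_of_nonneg_right h (hr' x₁).le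
      nlinarith [hr x₂, hr' x₂]
    · intro h
      have := mul_le_mul_of_nonneg_right h (hr x₁).le
      nlinarith [hr x₂, hr' x₂]
end

section
/- Let D ⊆ X × T with identifiability graph G having exactly K connected components G₁, …, G_K. For each i from 1 to K−1, suppose we add to D a new pair (xᵢ, tᵢ) where xᵢ is a feature already occurring in D with some bias factor in component Gᵢ and tᵢ is a bias factor belonging to component G_{i+1}. Then the identifiability graph of the augmented dataset D' = D ∪ {(x₁,t₁), …, (x_{K−1}, t_{K−1})} is connected. -/
/-- Correctness of node intervention: if the IG of `D` has exactly `K` connected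
components `V 0, …, V (K-1)`, and for each `i < K - 1` we add a new pair
`(f i, g i)` where `f i` already occurs in `D` with some bias factor of
component `V i` and `g i` belongs to component `V (i+1)`, then the IG of the
augmented dataset is connected. -/
theorem node_intervention_connects
    {X T : Type*} [Fintype X] [Fintype T]
    (D : Set (X × T)) (K : ℕ) (hK : 1 ≤ K)
    (V : ℕ → Set T)
    (hne : ∀ i < K, (V i).Nonempty)
    (hcover : ∀ t : T, ∃ i < K, t ∈ V i)
    (hdisj : ∀ i < K, ∀ j < K, i ≠ j → Disjoint (V i) (V j))
    (hclosed : ∀ i < K, ∀ s ∈ V i, ∀ t : T, (IG D).Reachable s t → t ∈ V i)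
    (hconn : ∀ i < K, ∀ s ∈ V i, ∀ t ∈ V i, (IG D).Reachable s t)
    (f : ℕ → X) (g : ℕ → T)
    (hf : ∀ i, i + 1 < K → ∃ u ∈ V i, (f i, u) ∈ D)
    (hg : ∀ i, i + 1 < K → g i ∈ V (i + 1)) :
    (IG (D ∪ {p : X × T | ∃ i, i + 1 < K ∧ p = (f i, g i)})).Connected := by
  set D' := D ∪ {p : X × T | ∃ i, i + 1 < K ∧ p = (f i, g i)} with hD'
  have hmono : IG D ≤ IG D' := by
    rintro a b ⟨h1, x, hx1, hx2⟩
    exact ⟨h1, x, Or.inl hx1, Or.inl hx2⟩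
  obtain ⟨t0, ht0⟩ := hne 0 hK
  have key : ∀ i, i < K → ∀ s ∈ V i, (IG D').Reachable t0 s := by
    intro i
    induction i with
    | zero => intro h s hs; exact ((hconn 0 hK t0 ht0 s hs).mono hmono)
    | succ n ih =>
      intro h s hs
      have hn : n < K := Nat.lt_of_succ_lt h
      obtain ⟨u, hu, hfu⟩ := hf n h
      have hg' := hg n h
      have h1 : (IG D').Reachable t0 u := ih hn u hu
      have hne' : u ≠ g n := by
        intro heq
        exact (Set.disjoint_left.mp
          (hdisj n hn (n+1) h (Nat.ne_of_lt (Nat.lt_succ_self n))) hu) (heq ▸ hg')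
      have hadj : (IG D').Adj u (g n) :=
        ⟨hne', f n, Or.inl hfu, Or.inr ⟨n, h, rfl⟩⟩
      have h2 : (IG D').Reachable (g n) s :=
        ((hconn (n+1) h (g n) hg' s hs).mono hmono)
      exact (h1.trans hadj.reachable).trans h2
  haveI : Nonempty T := ⟨t0⟩
  refine SimpleGraph.Connected.mk ?_
  intro a b
  obtain ⟨i, hi, hai⟩ := hcover a
  obtain ⟨j, hj, hbj⟩ := hcover b
  exact (key i hi a hai).symm.trans (key j hj b hbj)
end

section
/- Let X, T be finite sets and D ⊆ X × T. Suppose the identifiability graph G of D has connected components with vertex sets V₁, …, V_K (K ≥ 2). Define a merged bias set T' and surjection φ : T → T' such that φ identifies, for each i ∈ {1,…,K−1}, one chosen node of Vᵢ with one chosen node of V_{i+1}, and is injective elsewhere. Let D' = {(x, φ(t)) : (x,t) ∈ D}. Then the identifiability graph of D' (on vertex set T') is connected. -/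
/-- Correctness of node merging: if the IG of `D` has exactly `K ≥ 2` connected
components `V 0, …, V (K-1)` and the surjection `φ : T → T'` identifies, for each
`i < K - 1`, a chosen node `b i ∈ V i` with a chosen node `c i ∈ V (i+1)` (and is
injective elsewhere: its kernel is the equivalence generated by these pairs),
then the IG of the merged dataset `D' = {(x, φ t) | (x, t) ∈ D}` is connected. -/
theorem node_merging_connects
    {X T T' : Type*} [Fintype X] [Fintype T] [Fintype T']
    (D : Set (X × T)) (K : ℕ) (hK : 2 ≤ K)
    (V : ℕ → Set T)
    (hne : ∀ i < K, (V i).Nonempty)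
    (hcover : ∀ t : T, ∃ i < K, t ∈ V i)
    (hdisj : ∀ i < K, ∀ j < K, i ≠ j → Disjoint (V i) (V j))
    (hclosed : ∀ i < K, ∀ s ∈ V i, ∀ t : T, (IG D).Reachable s t → t ∈ V i)
    (hconn : ∀ i < K, ∀ s ∈ V i, ∀ t ∈ V i, (IG D).Reachable s t)
    (φ : T → T') (hsurj : Function.Surjective φ)
    (b c : ℕ → T)
    (hb : ∀ i, i + 1 < K → b i ∈ V i)
    (hc : ∀ i, i + 1 < K → c i ∈ V (i + 1))
    (hker : ∀ u v : T, φ u = φ v ↔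
      Relation.EqvGen (fun p q : T => ∃ i, i + 1 < K ∧ p = b i ∧ q = c i) u v) :
    (IG {p : X × T' | ∃ q ∈ D, p = (q.1, φ q.2)}).Connected := by
  set D' : Set (X × T') := {p : X × T' | ∃ q ∈ D, p = (q.1, φ q.2)} with hD'
  -- step 1: reachability transfers along φ
  have step : ∀ s t : T, (IG D).Reachable s t → (IG D').Reachable (φ s) (φ t) := by
    intro s t h
    obtain ⟨w⟩ := h
    induction w with
    | nil => exact SimpleGraph.Reachable.refl _
    | cons hadj p ih =>
      rename_i u v _
      refine SimpleGraph.Reachable.trans ?_ ih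
      by_cases heq : φ u = φ v
      · exact heq ▸ SimpleGraph.Reachable.refl _
      · obtain ⟨-, x, hx1, hx2⟩ := hadj
        exact SimpleGraph.Adj.reachable ⟨heq, x, ⟨_, hx1, rfl⟩, ⟨_, hx2, rfl⟩⟩
  -- merged nodes are equal
  have hbc : ∀ i, i + 1 < K → φ (b i) = φ (c i) := fun i hi =>
    (hker _ _).2 (Relation.EqvGen.rel _ _ ⟨i, hi, rfl, rfl⟩)
  have h0 : (0:ℕ) < K := by omega
  obtain ⟨t0, ht0⟩ := hne 0 h0
  -- every element of V i reaches φ t0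
  have main : ∀ i, i < K → ∀ t ∈ V i, (IG D').Reachable (φ t) (φ t0) := by
    intro i
    induction i with
    | zero => intro _ t ht; exact step _ _ (hconn 0 h0 t ht t0 ht0)
    | succ n ih =>
      intro hn t ht
      have hreach : (IG D').Reachable (φ t) (φ (c n)) :=
        step _ _ (hconn (n+1) hn t ht (c n) (hc n hn))
      refine hreach.trans ?_
      rw [← hbc n hn]
      exact step _ _ (hconn n (by omega) (b n) (hb n hn) (b n) (hb n hn)) |>.trans
        (ih (by omega) (b n) (hb n hn))
  have : Nonempty T' := ⟨φ t0⟩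
  refine ⟨fun u' v' => ?_⟩
  obtain ⟨u, rfl⟩ := hsurj u'
  obtain ⟨v, rfl⟩ := hsurj v'
  obtain ⟨i, hi, hu⟩ := hcover u
  obtain ⟨j, hj, hv⟩ := hcover v
  exact (main i hi u hu).trans (main j hj v hv).symm
end

section
/- Let X, T be finite sets, D ⊆ X × T with every x ∈ X and t ∈ T occurring in D, and suppose the identifiability graph of D is connected. Let r, o, r', o' be positive real-valued functions with r(x)o(t) = r'(x)o'(t) on D. Then there exists a constant C > 0 such that o'(t) = C·o(t) for all t ∈ T. -/
/-- Dual identifiability: under a connected identifiability graph, the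
observation model is identifiable up to a positive scaling constant. -/
theorem observation_identifiability_of_connected
    {X T : Type*} [Fintype X] [Fintype T]
    (D : Set (X × T))
    (hX : ∀ x : X, ∃ t : T, (x, t) ∈ D)
    (hT : ∀ t : T, ∃ x : X, (x, t) ∈ D)
    (hconn : (IG D).Connected)
    (r r' : X → ℝ) (o o' : T → ℝ)
    (hr : ∀ x, 0 < r x) (hr' : ∀ x, 0 < r' x)
    (ho : ∀ t, 0 < o t) (ho' : ∀ t, 0 < o' t)
    (hfit : ∀ x t, (x, t) ∈ D → r x * o t = r' x * o' t) :
    ∃ C : ℝ, 0 < C ∧ ∀ t : T, o' t = C * o t := by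
  have step : ∀ a b : T, (IG D).Adj a b → o' a / o a = o' b / o b := by
    intro a b ⟨hne, x, hxa, hxb⟩
    have h1 := hfit x a hxa
    have h2 := hfit x b hxb
    have := (hr x).ne'
    have := (hr' x).ne'
    have := (ho a).ne'
    have := (ho b).ne'
    field_simp
    nlinarith [ho a, ho b, ho' a, ho' b, hr x, hr' x]
  have key : ∀ a b : T, (IG D).Walk a b → o' a / o a = o' b / o b := by
    intro a b w
    induction w with
    | nil => rfl
    | cons h _ ih => exact (step _ _ h).trans ih
  obtain ⟨t₀⟩ := hconn.nonempty
  refine ⟨o' t₀ / o t₀, div_pos (ho' t₀) (ho t₀), fun t => ?_⟩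
  have := key t₀ t (hconn t₀ t).some
  rw [div_eq_div_iff (ho t₀).ne' (ho t).ne'] at this
  rw [div_mul_eq_mul_div, eq_div_iff (ho t₀).ne']
  linarith
end

section
/- Let T be a finite set with |T| = k, X a finite set, D ⊆ X × T such that there exists t₀ ∈ T for which no x ∈ X satisfies both (x, t₀) ∈ D and (x, t) ∈ D for any t ≠ t₀, while (x₀, t₀) ∈ D for some x₀ that appears with no other bias factor. Then the identifiability graph of D is disconnected (t₀ is an isolated vertex, assuming k ≥ 2), and hence for any positive r, o fitting the clicks there exist positive r', o' fitting the same clicks with r'/r non-constant. -/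
/-- Isolated-node scenario: if a bias factor `t₀` shares no feature with any
other bias factor (with `|T| ≥ 2`), then `t₀` is isolated in the identifiability
graph, the graph is disconnected, and relevance is unidentifiable: for any
positive `r, o` there are positive `r', o'` fitting the same clicks with `r'/r`
non-constant. -/
theorem isolated_node_unidentifiable
    {X T : Type*} [Fintype X] [Fintype T] [Nonempty X] [Nonempty T]
    (D : Set (X × T))
    (hX : ∀ x : X, ∃ t : T, (x, t) ∈ D)
    (hT : ∀ t : T, ∃ x : X, (x, t) ∈ D)
    (hk : 2 ≤ Fintype.card T)
    (t₀ : T)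
    (hiso : ∀ x : X, ∀ t : T, t ≠ t₀ → ¬ ((x, t₀) ∈ D ∧ (x, t) ∈ D))
    (x₀ : X) (hx₀ : (x₀, t₀) ∈ D)
    (hx₀only : ∀ t : T, (x₀, t) ∈ D → t = t₀) :
    (∀ t : T, ¬ (IG D).Adj t₀ t) ∧
    ¬ (IG D).Connected ∧
    (∀ (r : X → ℝ) (o : T → ℝ), (∀ x, 0 < r x) → (∀ t, 0 < o t) →
      ∃ (r' : X → ℝ) (o' : T → ℝ),
        (∀ x, 0 < r' x) ∧ (∀ t, 0 < o' t) ∧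
        (∀ x t, (x, t) ∈ D → r x * o t = r' x * o' t) ∧
        ¬ ∃ C : ℝ, 0 < C ∧ ∀ x : X, r x = C * r' x) := by
  -- t₀ is isolated
  have hisol : ∀ t : T, ¬ (IG D).Adj t₀ t := by
    rintro t ⟨hne, x, h0, ht⟩
    exact hiso x t (Ne.symm hne) ⟨h0, ht⟩
  -- some t₁ ≠ t₀
  obtain ⟨t₁, hne⟩ : ∃ t₁ : T, t₁ ≠ t₀ := by
    by_contra h
    push_neg at h
    have : Fintype.card T ≤ 1 := Fintype.card_le_one_iff.mpr (fun a b => (h a).trans (h b).symm)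
    omega
  refine ⟨hisol, ?_, ?_⟩
  · intro hconn
    obtain ⟨w⟩ := hconn.preconnected t₀ t₁
    cases w with
    | nil => exact hne rfl
    | cons h _ => exact hisol _ h
  · intro r o hr ho
    obtain ⟨x₁, hx₁⟩ := hT t₁
    have hx₁0 : (x₁, t₀) ∉ D := fun h => hiso x₁ t₁ hne ⟨h, hx₁⟩
    classical
    refine ⟨fun x => if (x, t₀) ∈ D then 2 * r x else r x,
      fun t => if t = t₀ then o t / 2 else o t, ?_, ?_, ?_, ?_⟩
    · intro x; dsimp only; split <;> [linarith [hr x]; exact hr x]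
    · intro t; dsimp only; split <;> [linarith [ho t]; exact ho t]
    · intro x t hxt
      dsimp only
      by_cases h : t = t₀
      · rw [if_pos (h ▸ hxt), if_pos h, h]
        ring
      · have : (x, t₀) ∉ D := fun h0 => hiso x t h ⟨h0, hxt⟩
        rw [if_neg this, if_neg h]
    · rintro ⟨C, hC, hall⟩
      have h0 := hall x₀
      have h1 := hall x₁
      dsimp only at h0 h1
      rw [if_pos hx₀] at h0
      rw [if_neg hx₁0] at h1
      have hC1 : C = 1 := by
        have := (hr x₁).ne'
        field_simp at h1
        nlinarith [hr x₁]
      rw [hC1, one_mul] at h0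
      nlinarith [hr x₀]
end
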